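/- Let G be a simple graph on a finite vertex set V with |V| ≥ 2, let t ≥ 1, and let G' = G[K_t] be the true-twin blow-up of G: the simple graph on V × Fin t in which (u,i) and (v,j) are adjacent if and only if either u = v and i ≠ j, or u ≠ v and u is adjacent to v in G. Then lrw(G') ≥ lrw(G): the linear rank-width of the blow-up is at least the linear rank-width of the base graph. -/

import Mathlib

open Classical

/-- The `F₂`-adjacency matrix of a simple graph. -/
noncomputable def adjMat {V : Type*} [Fintype V] (G : SimpleGraph V) : Matrix V V (ZMod 2) :=
  fun u v => if G.Adj u v then 1 else 0

/-- The cut matrix `A[X, V\X]` of the cut `(X, V\X)`. -/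
noncomputable def cutMat {V : Type*} [Fintype V] (G : SimpleGraph V) (X : Finset V) :
    Matrix {v // v ∈ X} {w : V // w ∉ X} (ZMod 2) :=
  fun u w => adjMat G u.1 w.1

/-- The prefix `π({0,…,i−1})` of a linear layout `π`. -/
noncomputable def layoutPrefix {V : Type*} [Fintype V] [DecidableEq V] {n : ℕ}
    (π : Fin n ≃ V) (i : ℕ) : Finset V :=
  (Finset.univ.filter (fun j : Fin n => (j : ℕ) < i)).image π

/-- The width of a linear layout `π`: the maximum over `1 ≤ i ≤ n−1` of the `F₂`-rank of
`A[π({0,…,i−1}), V \ π({0,…,i−1})]`. -/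
noncomputable def layoutWidth {V : Type*} [Fintype V] [DecidableEq V] (G : SimpleGraph V)
    (π : Fin (Fintype.card V) ≃ V) : ℕ :=
  (Finset.Ico 1 (Fintype.card V)).sup (fun i => (cutMat G (layoutPrefix π i)).rank)

/-- The linear rank-width of `G`: the minimum width over all linear layouts. -/
noncomputable def lrw {V : Type*} [Fintype V] [DecidableEq V] (G : SimpleGraph V) : ℕ :=
  ⨅ π : Fin (Fintype.card V) ≃ V, layoutWidth G π

/-- The true-twin blow-up `G[K_t]`: `(u,i)` and `(v,j)` are adjacent iff `u = v` and
`i ≠ j`, or `u ≠ v` and `u` is adjacent to `v` in `G`. -/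
def blowup {V : Type*} (G : SimpleGraph V) (t : ℕ) : SimpleGraph (V × Fin t) where
  Adj p q := (p.1 = q.1 ∧ p.2 ≠ q.2) ∨ (p.1 ≠ q.1 ∧ G.Adj p.1 q.1)
  symm := by
    constructor
    intro p q h
    rcases h with ⟨h1, h2⟩ | ⟨h1, h2⟩
    · exact Or.inl ⟨h1.symm, h2.symm⟩
    · exact Or.inr ⟨h1.symm, h2.symm⟩
  loopless := by
    constructor
    intro p h
    rcases h with ⟨_, h2⟩ | ⟨h1, _⟩
    · exact h2 rfl
    · exact h1 rfl


lemma Matrix.rank_submatrix_le_general {m n m' n' R : Type*} [Fintype m] [Fintype n]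
    [Fintype m'] [Fintype n'] [CommRing R] [StrongRankCondition R]
    (A : Matrix m n R) (r : m' → m) (c : n' → n) :
    (A.submatrix r c).rank ≤ A.rank := by
  classical
  have h : A.submatrix r c =
      (Matrix.of (fun (i' : m') (i : m) => if r i' = i then (1:R) else 0)) * A *
      (Matrix.of (fun (j : n) (j' : n') => if c j' = j then (1:R) else 0)) := by
    ext i' j'
    simp [Matrix.mul_apply, Finset.sum_ite_eq, ite_mul, mul_ite]
  rw [h]
  exact le_trans (Matrix.rank_mul_le_left _ _) (Matrix.rank_mul_le_right _ _)

lemma mem_layoutPrefix {V : Type*} [Fintype V] [DecidableEq V] {n : ℕ}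
    (π : Fin n ≃ V) (i : ℕ) (v : V) :
    v ∈ layoutPrefix π i ↔ ((π.symm v : Fin n) : ℕ) < i := by
  simp only [layoutPrefix, Finset.mem_image, Finset.mem_filter, Finset.mem_univ, true_and]
  constructor
  · rintro ⟨j, hj, rfl⟩; simpa using hj
  · intro h; exact ⟨π.symm v, h, π.apply_symm_apply v⟩

lemma blowup_adj {V : Type*} (G : SimpleGraph V) (t : ℕ) (p q : V × Fin t) :
    (blowup G t).Adj p q ↔ (p.1 = q.1 ∧ p.2 ≠ q.2) ∨ (p.1 ≠ q.1 ∧ G.Adj p.1 q.1) := Iff.rfl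

/-- the linear rank-width of the true-twin blow-up `G[K_t]` is at least the
linear rank-width of the base graph `G`. -/
theorem lrw_blowup_ge {V : Type*} [Fintype V] [DecidableEq V] (G : SimpleGraph V)
    (hV : 2 ≤ Fintype.card V) (t : ℕ) (ht : 1 ≤ t) :
    lrw G ≤ lrw (blowup G t) := by
  classical
  haveI : NeZero t := ⟨by omega⟩
  haveI hNE : Nonempty (Fin (Fintype.card (V × Fin t)) ≃ V × Fin t) :=
    ⟨(Fintype.equivFin _).symm⟩
  apply le_ciInf
  intro π'
  -- f v : first position of a copy of v
  have htne : ∀ v : V, ((Finset.univ : Finset (Fin t)).image (fun j => π'.symm (v, j))).Nonempty :=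
    fun v => Finset.Nonempty.image Finset.univ_nonempty _
  set f : V → Fin (Fintype.card (V × Fin t)) := fun v => Finset.min' _ (htne v) with hfdef
  have hf1 : ∀ v, (π' (f v)).1 = v := by
    intro v
    have hm := Finset.min'_mem _ (htne v)
    simp only [Finset.mem_image, Finset.mem_univ, true_and] at hm
    obtain ⟨j, hj⟩ := hm
    rw [show f v = π'.symm (v, j) from hj.symm]
    simp
  have hfinj : Function.Injective f := by
    intro u v h
    have := congrArg (fun x => (π' x).1) h
    simpa [hf1] using this
  -- sort V by f
  have hcard : (Finset.univ.image f).card = Fintype.card V := by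
    rw [Finset.card_image_of_injective _ hfinj, Finset.card_univ]
  set e := Finset.orderIsoOfFin _ hcard with hedef
  set π₀ : Fin (Fintype.card V) → V := fun j => (π' ((e j : Fin (Fintype.card (V × Fin t))))).1
    with hπ₀
  have hfe : ∀ j, f (π₀ j) = (e j : Fin (Fintype.card (V × Fin t))) := by
    intro j
    have hm := (e j).2
    simp only [Finset.mem_image, Finset.mem_univ, true_and] at hm
    obtain ⟨v, hv⟩ := hm
    have : π₀ j = v := by rw [hπ₀]; simp only [← hv, hf1]
    rw [this, hv]
  have hF : ∀ {j j'}, j < j' → f (π₀ j) < f (π₀ j') := by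
    intro j j' hjj
    have := e.strictMono hjj
    rw [hfe, hfe]
    exact this
  have hFm : ∀ {j j'}, j ≤ j' → f (π₀ j) ≤ f (π₀ j') := by
    intro j j' hjj
    rcases eq_or_lt_of_le hjj with rfl | h
    · exact le_refl _
    · exact le_of_lt (hF h)
  have hbij : Function.Bijective π₀ := by
    constructor
    · intro j j' h
      exact e.injective (Subtype.ext (by rw [← hfe, ← hfe, h]))
    · intro v
      have : f v ∈ Finset.univ.image f := Finset.mem_image_of_mem f (Finset.mem_univ v)
      obtain ⟨j, hj⟩ := e.surjective ⟨f v, this⟩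
      exact ⟨j, hfinj (by rw [hfe, hj])⟩
  set π : Fin (Fintype.card V) ≃ V := Equiv.ofBijective π₀ hbij with hπ
  refine le_trans (ciInf_le (OrderBot.bddBelow _) π) ?_
  -- width comparison
  rw [layoutWidth, layoutWidth]
  apply Finset.sup_le
  intro i hi
  rw [Finset.mem_Ico] at hi
  obtain ⟨hi1, hin⟩ := hi
  set k : ℕ := (f (π₀ ⟨i, hin⟩) : ℕ) with hk
  have hk1 : 1 ≤ k := by
    have h0 : (⟨0, by omega⟩ : Fin (Fintype.card V)) < ⟨i, hin⟩ := by
      simp only [Fin.lt_def]; omega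
    have h1 := Fin.lt_iff_val_lt_val.mp (hF h0)
    omega
  have hkN : k < Fintype.card (V × Fin t) := (f (π₀ ⟨i, hin⟩)).isLt
  have hkmem : k ∈ Finset.Ico 1 (Fintype.card (V × Fin t)) := Finset.mem_Ico.mpr ⟨hk1, hkN⟩
  refine le_trans ?_ (Finset.le_sup hkmem)
  -- core: rank comparison via submatrix
  set X := layoutPrefix π i with hX
  set Y := layoutPrefix π' k with hY
  have hmemX : ∀ v : V, v ∈ X ↔ ((π.symm v : Fin (Fintype.card V)) : ℕ) < i :=
    fun v => mem_layoutPrefix π i v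
  have hmemY : ∀ p, p ∈ Y ↔ ((π'.symm p : Fin (Fintype.card (V × Fin t))) : ℕ) < k :=
    fun p => mem_layoutPrefix π' k p
  have hrow : ∀ u : {v // v ∈ X}, π' (f u.1) ∈ Y := by
    rintro ⟨u, hu⟩
    rw [hmemY, Equiv.symm_apply_apply]
    rw [hmemX] at hu
    have hlt : π.symm u < (⟨i, hin⟩ : Fin (Fintype.card V)) := Fin.lt_iff_val_lt_val.mpr hu
    have h3 := hF hlt
    have h2 : π₀ (π.symm u) = u := π.apply_symm_apply u
    rw [h2] at h3
    exact Fin.lt_iff_val_lt_val.mp h3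
  have hcol : ∀ w : {w : V // w ∉ X}, π' (f w.1) ∉ Y := by
    rintro ⟨w, hw⟩
    rw [hmemY, Equiv.symm_apply_apply]
    rw [hmemX] at hw
    push_neg at hw
    have hle : (⟨i, hin⟩ : Fin (Fintype.card V)) ≤ π.symm w := Fin.le_iff_val_le_val.mpr hw
    have h3 := hFm hle
    have h2 : π₀ (π.symm w) = w := π.apply_symm_apply w
    rw [h2] at h3
    have h4 := Fin.le_iff_val_le_val.mp h3
    intro hlt
    have h5 : ((f w : Fin (Fintype.card (V × Fin t))) : ℕ) < k := hlt
    omega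
  have hsub : cutMat G X = (cutMat (blowup G t) Y).submatrix
      (fun u : {v // v ∈ X} => (⟨π' (f u.1), hrow u⟩ : {p // p ∈ Y}))
      (fun w : {w : V // w ∉ X} => (⟨π' (f w.1), hcol w⟩ : {q // q ∉ Y})) := by
    ext u w
    have hu : (π' (f u.1)).1 = u.1 := hf1 _
    have hw : (π' (f w.1)).1 = w.1 := hf1 _
    have hne : u.1 ≠ w.1 := fun h => w.2 (h ▸ u.2)
    by_cases h : G.Adj u.1 w.1 <;>
      simp [cutMat, adjMat, blowup_adj, hu, hw, hne, h]
  rw [hsub]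
  exact Matrix.rank_submatrix_le_general _ _ _
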